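/- arXiv:0706.1483 — 2 statements merged into one kernel-verified Lean document; each statement's English description precedes it below -/
import Mathlib

section
/- The map î : ℝ^d → S_A defined by î(x) = (π((A^T)^{-n} x))_{n∈ℕ} is well defined (its values lie in S_A), is an injective additive group homomorphism, and satisfies î(A^T x) = σ_A(î(x)) for all x ∈ ℝ^d. -/
open Matrix MeasureTheory Filter Topology

noncomputable section

/-- The integer lattice ℤ^d inside ℝ^d. -/
def intLattice (d : ℕ) : AddSubgroup (Fin d → ℝ) where
  carrier := {x | ∀ i, ∃ k : ℤ, x i = (k : ℝ)}
  zero_mem' := fun i => ⟨0, by simp⟩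
  add_mem' := by
    intro x y hx hy i
    obtain ⟨a, ha⟩ := hx i
    obtain ⟨b, hb⟩ := hy i
    exact ⟨a + b, by simp [ha, hb]⟩
  neg_mem' := by
    intro x hx i
    obtain ⟨a, ha⟩ := hx i
    exact ⟨-a, by simp [ha]⟩

/-- The torus ℝ^d / ℤ^d. -/
abbrev Torus (d : ℕ) := (Fin d → ℝ) ⧸ intLattice d

/-- The quotient homomorphism π : ℝ^d → 𝕋^d. -/
def torusMk (d : ℕ) : (Fin d → ℝ) →+ Torus d := QuotientAddGroup.mk' (intLattice d)

/-- A square integer matrix is expansive if all of its complex eigenvalues `μ`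
satisfy `|μ| > 1`. -/
def Expansive {d : ℕ} (A : Matrix (Fin d) (Fin d) ℤ) : Prop :=
  ∀ μ : ℂ, (Matrix.charpoly (A.map (Int.cast : ℤ → ℂ))).IsRoot μ → 1 < ‖μ‖

/-- The real matrix associated to an integer matrix. -/
def toR {d : ℕ} (A : Matrix (Fin d) (Fin d) ℤ) : Matrix (Fin d) (Fin d) ℝ :=
  A.map (Int.cast : ℤ → ℝ)

lemma latticeMap_aux {d : ℕ} (M : Matrix (Fin d) (Fin d) ℤ) :
    intLattice d ≤ (intLattice d).comap (toR M).mulVecLin.toAddMonoidHom := by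
  intro x hx
  choose k hk using hx
  intro i
  refine ⟨∑ j, M i j * k j, ?_⟩
  have : (toR M).mulVecLin.toAddMonoidHom x i = ∑ j, (M i j : ℝ) * (k j : ℝ) := by
    simp [toR, Matrix.mulVec, dotProduct, hk, Matrix.map_apply]
  rw [this]
  push_cast
  ring

/-- The endomorphism of the torus induced by an integer matrix. -/
def torusHom {d : ℕ} (M : Matrix (Fin d) (Fin d) ℤ) : Torus d →+ Torus d :=
  QuotientAddGroup.map _ _ (toR M).mulVecLin.toAddMonoidHom (latticeMap_aux M)

/-- The solenoid `S_A`, as an additive subgroup of `(𝕋^d)^ℕ`. -/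
def solenoid {d : ℕ} (A : Matrix (Fin d) (Fin d) ℤ) : AddSubgroup (ℕ → Torus d) where
  carrier := {z | ∀ n, torusHom Aᵀ (z (n + 1)) = z n}
  zero_mem' := by intro n; simp
  add_mem' := by
    intro a b ha hb n
    simp only [Pi.add_apply, map_add, ha n, hb n]
  neg_mem' := by
    intro a ha n
    simp only [Pi.neg_apply, map_neg, ha n]

/-- The shift automorphism σ_A of the solenoid (written on the ambient space). -/
def sigmaA {d : ℕ} (A : Matrix (Fin d) (Fin d) ℤ) (z : ℕ → Torus d) : ℕ → Torus d
  | 0 => torusHom Aᵀ (z 0)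
  | n + 1 => z n

/-- The embedding î : ℝ^d → S_A, î(x) = (π((Aᵀ)^{-n} x))ₙ. -/
def ihat {d : ℕ} (A : Matrix (Fin d) (Fin d) ℤ) (x : Fin d → ℝ) : ℕ → Torus d :=
  fun n => torusMk d ((((toR A)ᵀ)⁻¹ ^ n).mulVec x)

end

/-!
Membership in `S_A`, additivity and the equivariance are formal consequences of
`Aᵀ (Aᵀ)⁻¹ = 1`. For injectivity, if `î v = 0` then every `(Aᵀ)⁻ⁿ v` is an integer vector.
All complex eigenvalues of `(Aᵀ)⁻¹` lie in the open unit disc, so by Gelfand's formula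
`(Aᵀ)⁻ⁿ → 0`; hence some `(Aᵀ)⁻ᴺ v` is an integer vector of sup norm `< 1`, i.e. `0`, and `v = 0`.
-/

open scoped NNReal ENNReal

theorem tendsto_pow_atTop_nhds_zero_of_forall_spectrum_norm_lt_one {A : Type*} [NormedRing A]
    [NormedAlgebra ℂ A] [CompleteSpace A] {a : A} (ha : ∀ ν ∈ spectrum ℂ a, ‖ν‖ < 1) :
    Tendsto (a ^ ·) atTop (𝓝 0) := by
  nontriviality A
  have hρ : spectralRadius ℂ a < 1 := by
    exact_mod_cast spectrum.spectralRadius_lt_of_forall_lt a fun ν hν =>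
      (by exact_mod_cast ha ν hν : ‖ν‖₊ < 1)
  obtain ⟨c, hρc, hc1⟩ := exists_between hρ
  have hc_top : c ≠ ⊤ := hc1.ne_top
  have hc_lt : c.toReal < 1 := by simpa using ENNReal.toReal_strict_mono ENNReal.one_ne_top hc1
  have hbound : ∀ᶠ n : ℕ in atTop, ‖a ^ n‖ ≤ c.toReal ^ n := by
    filter_upwards [eventually_ne_atTop 0,
      (spectrum.pow_nnnorm_pow_one_div_tendsto_nhds_spectralRadius a).eventually_lt_const hρc]
      with n hn0 hn
    have : (‖a ^ n‖₊ : ℝ≥0∞) ≤ c ^ n := by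
      calc (‖a ^ n‖₊ : ℝ≥0∞) = ((‖a ^ n‖₊ : ℝ≥0∞) ^ (1 / n : ℝ)) ^ (n : ℝ) := by
            rw [← ENNReal.rpow_mul, one_div_mul_cancel (by exact_mod_cast hn0), ENNReal.rpow_one]
        _ ≤ c ^ (n : ℝ) := by gcongr
        _ = c ^ n := ENNReal.rpow_natCast c n
    simpa [ENNReal.toReal_pow] using ENNReal.toReal_mono (by simp [hc_top]) this
  exact squeeze_zero_norm' hbound
    (tendsto_pow_atTop_nhds_zero_of_lt_one ENNReal.toReal_nonneg hc_lt)

section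

variable {ι : Type*} [Fintype ι] [DecidableEq ι]

theorem Matrix.tendsto_pow_atTop_nhds_zero_of_forall_spectrum_map_ofReal_norm_lt_one
    (M : Matrix ι ι ℝ) (hM : ∀ ν ∈ spectrum ℂ (M.map Complex.ofReal), ‖ν‖ < 1) :
    Tendsto (M ^ ·) atTop (𝓝 0) := by
  have hpow (n : ℕ) : ((M.map Complex.ofReal) ^ n).map Complex.re = M ^ n := by
    change (Complex.ofRealHom.mapMatrix M ^ n).map Complex.re = _
    rw [← map_pow, RingHom.mapMatrix_apply, Matrix.map_map]
    ext i j
    simp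
  have hre : Continuous fun N : Matrix ι ι ℂ => N.map Complex.re :=
    continuous_id.matrix_map Complex.continuous_re
  -- Any Banach-algebra norm on complex matrices will do; all induce the product topology.
  let _ := Matrix.linftyOpNormedRing (n := ι) (α := ℂ)
  let _ := Matrix.linftyOpNormedAlgebra (n := ι) (R := ℂ) (α := ℂ)
  simpa [Function.comp_def, hpow] using
    (hre.tendsto 0).comp (_root_.tendsto_pow_atTop_nhds_zero_of_forall_spectrum_norm_lt_one hM)

theorem Matrix.spectrum_nonsing_inv {K : Type*} [Field K] {M : Matrix ι ι K} (hM : IsUnit M) :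
    spectrum K M⁻¹ = (spectrum K M)⁻¹ := by
  rw [← hM.unit_spec, ← Matrix.coe_units_inv, ← spectrum.map_inv]

theorem Matrix.isUnit_of_forall_spectrum_map_ofReal_one_lt_norm {M : Matrix ι ι ℝ}
    (hM : ∀ μ ∈ spectrum ℂ (M.map Complex.ofReal), 1 < ‖μ‖) : IsUnit M := by
  have hMc : IsUnit (M.map Complex.ofReal) := by
    by_contra h
    exact (hM 0 (spectrum.zero_mem_iff ℂ |>.mpr h)).not_ge (by simp)
  rw [Matrix.isUnit_iff_isUnit_det, isUnit_iff_ne_zero] at hMc ⊢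
  rw [← Complex.ofReal_ne_zero]
  exact (Complex.ofRealHom.map_det M).trans_ne hMc

theorem Matrix.tendsto_inv_pow_atTop_nhds_zero_of_forall_spectrum_map_ofReal_one_lt_norm
    {M : Matrix ι ι ℝ} (hM : ∀ μ ∈ spectrum ℂ (M.map Complex.ofReal), 1 < ‖μ‖) :
    Tendsto (M⁻¹ ^ ·) atTop (𝓝 0) := by
  have hunit := isUnit_of_forall_spectrum_map_ofReal_one_lt_norm hM
  have hinv : M⁻¹.map Complex.ofReal = (M.map Complex.ofReal)⁻¹ := by
    refine (inv_eq_left_inv ?_).symm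
    calc M⁻¹.map Complex.ofReal * M.map Complex.ofReal = (M⁻¹ * M).map Complex.ofReal :=
          (Matrix.map_mul (f := Complex.ofRealHom)).symm
      _ = 1 := by
        rw [nonsing_inv_mul _ ((isUnit_iff_isUnit_det M).mp hunit),
          Matrix.map_one _ Complex.ofReal_zero Complex.ofReal_one]
  have hunit_c : IsUnit (M.map Complex.ofReal) := hunit.map Complex.ofRealHom.mapMatrix
  refine tendsto_pow_atTop_nhds_zero_of_forall_spectrum_map_ofReal_norm_lt_one _ fun ν hν => ?_
  rw [hinv, spectrum_nonsing_inv hunit_c, Set.mem_inv] at hν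
  have := hM _ hν
  rw [norm_inv, one_lt_inv_iff₀] at this
  exact this.2

end

lemma Expansive.one_lt_norm_of_mem_spectrum {d : ℕ} {A : Matrix (Fin d) (Fin d) ℤ}
    (hA : Expansive A) : ∀ μ ∈ spectrum ℂ (((toR A)ᵀ).map Complex.ofReal), 1 < ‖μ‖ := by
  have : ((toR A)ᵀ).map Complex.ofReal = (A.map (Int.cast : ℤ → ℂ))ᵀ := by
    ext i j
    simp [toR]
  intro μ hμ
  rw [this, Matrix.mem_spectrum_iff_isRoot_charpoly, Matrix.charpoly_transpose] at hμ
  exact hA μ hμ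

lemma eq_zero_of_mem_intLattice_of_norm_lt_one {d : ℕ} {x : Fin d → ℝ} (hx : x ∈ intLattice d)
    (h : ‖x‖ < 1) : x = 0 := by
  funext i
  obtain ⟨k, hk⟩ := hx i
  have hk1 : |(k : ℝ)| < 1 := by
    simpa [hk] using (norm_le_pi_norm x i).trans_lt h
  have hk0 : k = 0 := Int.abs_lt_one_iff.mp (by exact_mod_cast hk1)
  rw [hk, hk0, Int.cast_zero, Pi.zero_apply]

lemma torusHom_torusMk {d : ℕ} (M : Matrix (Fin d) (Fin d) ℤ) (y : Fin d → ℝ) :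
    torusHom M (torusMk d y) = torusMk d (toR M *ᵥ y) :=
  rfl

lemma toR_transpose {d : ℕ} (M : Matrix (Fin d) (Fin d) ℤ) : toR Mᵀ = (toR M)ᵀ :=
  rfl

lemma torusMk_eq_zero_iff {d : ℕ} {x : Fin d → ℝ} : torusMk d x = 0 ↔ x ∈ intLattice d :=
  QuotientAddGroup.eq_zero_iff x

section ihat

variable {d : ℕ} {A : Matrix (Fin d) (Fin d) ℤ}

lemma ihat_apply (x : Fin d → ℝ) (n : ℕ) : ihat A x n = torusMk d (((toR A)ᵀ⁻¹ ^ n) *ᵥ x) :=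
  rfl

lemma ihat_add (x y : Fin d → ℝ) : ihat A (x + y) = ihat A x + ihat A y := by
  funext n
  simp only [ihat_apply, Pi.add_apply, mulVec_add, map_add]

variable (A) in
noncomputable def ihatHom : (Fin d → ℝ) →+ (ℕ → Torus d) :=
  AddMonoidHom.mk' (ihat A) ihat_add

lemma ihat_eq_zero_iff {v : Fin d → ℝ} :
    ihat A v = 0 ↔ ∀ n, ((toR A)ᵀ⁻¹ ^ n) *ᵥ v ∈ intLattice d := by
  simp only [funext_iff, ihat_apply, Pi.zero_apply, torusMk_eq_zero_iff]

lemma ihat_mem_solenoid (hunit : IsUnit (toR A)ᵀ) (x : Fin d → ℝ) : ihat A x ∈ solenoid A := by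
  intro n
  rw [ihat_apply, ihat_apply, torusHom_torusMk, toR_transpose, mulVec_mulVec, pow_succ',
    ← mul_assoc, mul_nonsing_inv _ ((isUnit_iff_isUnit_det _).mp hunit), one_mul]

lemma ihat_mulVec (hunit : IsUnit (toR A)ᵀ) (x : Fin d → ℝ) :
    ihat A ((toR A)ᵀ *ᵥ x) = sigmaA A (ihat A x) := by
  funext n
  cases n with
  | zero => simp [ihat_apply, sigmaA, torusHom_torusMk, toR_transpose]
  | succ n =>
    rw [ihat_apply, mulVec_mulVec, pow_succ, mul_assoc,
      nonsing_inv_mul _ ((isUnit_iff_isUnit_det _).mp hunit), mul_one]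
    rfl

lemma ihat_injective (hA : Expansive A) : Function.Injective (ihat A) := by
  have hspec := hA.one_lt_norm_of_mem_spectrum
  refine (injective_iff_map_eq_zero (ihatHom A)).mpr fun v hv => ?_
  have htend : Tendsto (fun n => ((toR A)ᵀ⁻¹ ^ n) *ᵥ v) atTop (𝓝 0) := by
    simpa [Function.comp_def] using
      ((continuous_id.matrix_mulVec continuous_const).tendsto 0).comp
        (tendsto_inv_pow_atTop_nhds_zero_of_forall_spectrum_map_ofReal_one_lt_norm hspec)
  obtain ⟨N, hN⟩ := (htend.eventually (Metric.ball_mem_nhds 0 one_pos)).exists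
  have hzero := eq_zero_of_mem_intLattice_of_norm_lt_one (ihat_eq_zero_iff.mp hv N)
    (by simpa using hN)
  have hunit : IsUnit ((toR A)ᵀ⁻¹ ^ N) :=
    (isUnit_nonsing_inv_iff.mpr (isUnit_of_forall_spectrum_map_ofReal_one_lt_norm hspec)).pow N
  exact mulVec_injective_of_isUnit hunit (hzero.trans (mulVec_zero _).symm)

end ihat

theorem statement0_general (d : ℕ) (A : Matrix (Fin d) (Fin d) ℤ)
    (hA : Expansive A) :
    (∀ x : Fin d → ℝ, ihat A x ∈ solenoid A) ∧
    Function.Injective (ihat A) ∧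
    (∀ x y : Fin d → ℝ, ihat A (x + y) = ihat A x + ihat A y) ∧
    (∀ x : Fin d → ℝ, ihat A (((toR A)ᵀ).mulVec x) = sigmaA A (ihat A x)) := by
  have hunit := isUnit_of_forall_spectrum_map_ofReal_one_lt_norm hA.one_lt_norm_of_mem_spectrum
  exact ⟨ihat_mem_solenoid hunit, ihat_injective hA, ihat_add, ihat_mulVec hunit⟩

/-- the map î is well defined (takes values in the solenoid `S_A`),
is an injective additive group homomorphism, and satisfies î(Aᵀx) = σ_A(î(x)). -/
theorem statement0 (d : ℕ) (hd : 0 < d) (A : Matrix (Fin d) (Fin d) ℤ)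
    (hA : Expansive A) :
    (∀ x : Fin d → ℝ, ihat A x ∈ solenoid A) ∧
    Function.Injective (ihat A) ∧
    (∀ x y : Fin d → ℝ, ihat A (x + y) = ihat A x + ihat A y) ∧
    (∀ x : Fin d → ℝ, ihat A (((toR A)ᵀ).mulVec x) = sigmaA A (ihat A x)) :=
  statement0_general d A hA
end

section
/- Assume (A, D) satisfies the tiling condition. Define ρ : ℝ^d × Ω → ℝ^d × Ω by ρ(x, ω₀ω₁ω₂…) = (τ_{ω₀}(x), ω₁ω₂…). Then ρ maps X(A^T,D) × Ω onto X(A^T,D) × Ω, and ρ is injective on X(A^T,D) × Ω almost everywhere, in the sense that the set of points x ∈ X(A^T,D) for which there exist x' ∈ X(A^T,D) and ω, ω' ∈ Ω with (x, ω) ≠ (x', ω') and ρ(x, ω) = ρ(x', ω') has d-dimensional Lebesgue measure zero. -/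
open Matrix MeasureTheory Filter Topology

/-- D is a complete set of representatives of ℤ^d / Aᵀℤ^d. -/
def CompleteDigits {d : ℕ} (A : Matrix (Fin d) (Fin d) ℤ) (D : Set (Fin d → ℤ)) : Prop :=
  ∀ x : Fin d → ℤ, ∃! v : Fin d → ℤ, v ∈ D ∧ ∃ y : Fin d → ℤ, x - v = Aᵀ.mulVec y

/-- The affine map τ_v(x) = (Aᵀ)⁻¹(x + v) for a digit v ∈ ℤ^d. -/
noncomputable def tauD {d : ℕ} (A : Matrix (Fin d) (Fin d) ℤ) (v : Fin d → ℤ)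
    (x : Fin d → ℝ) : Fin d → ℝ :=
  (((toR A)ᵀ)⁻¹).mulVec (x + fun i => (v i : ℝ))

/-- The attractor X(Aᵀ, D) = { ∑_{j≥1} (Aᵀ)^{−j} d_j : d_j ∈ D }. -/
def attractor (d : ℕ) (A : Matrix (Fin d) (Fin d) ℤ) (D : Set (Fin d → ℤ)) :
    Set (Fin d → ℝ) :=
  {x | ∃ dig : ℕ → Fin d → ℤ, (∀ j, dig j ∈ D) ∧
    HasSum (fun j : ℕ => ((((toR A)ᵀ)⁻¹) ^ (j + 1)).mulVec fun i => (dig j i : ℝ)) x}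

/-- Iterated maps: tauWord ω n = τ_{ω_{n−1}} ∘ ⋯ ∘ τ_{ω_0} (identity for n = 0). -/
noncomputable def tauWord {d : ℕ} (A : Matrix (Fin d) (Fin d) ℤ)
    (ω : ℕ → Fin d → ℤ) : ℕ → (Fin d → ℝ) → Fin d → ℝ
  | 0 => fun x => x
  | n + 1 => fun x => tauD A (ω n) (tauWord A ω n x)

/-- The decoding map 𝔡 : ℝ^d × Ω → S_A, 𝔡(x,ω)_n = π(τ_{ω_{n−1}}⋯τ_{ω_0} x). -/
noncomputable def codeMap {d : ℕ} (A : Matrix (Fin d) (Fin d) ℤ)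
    (x : Fin d → ℝ) (ω : ℕ → Fin d → ℤ) : ℕ → Torus d :=
  fun n => torusMk d (tauWord A ω n x)

/-- The tiling condition: X(Aᵀ,D) tiles ℝ^d by ℤ^d up to Lebesgue-null sets. -/
def TilingCondition (d : ℕ) (A : Matrix (Fin d) (Fin d) ℤ) (D : Set (Fin d → ℤ)) : Prop :=
  volume (Set.univ \ ⋃ k : Fin d → ℤ,
      (fun y => y + fun i => (k i : ℝ)) '' attractor d A D) = 0 ∧
  ∀ k k' : Fin d → ℤ, k ≠ k' →
    volume (((fun y => y + fun i => (k i : ℝ)) '' attractor d A D) ∩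
      ((fun y => y + fun i => (k' i : ℝ)) '' attractor d A D)) = 0

/-- The map ρ(x, ω₀ω₁ω₂…) = (τ_{ω₀}(x), ω₁ω₂…). -/
noncomputable def rhoMap {d : ℕ} (A : Matrix (Fin d) (Fin d) ℤ)
    (q : (Fin d → ℝ) × (ℕ → Fin d → ℤ)) : (Fin d → ℝ) × (ℕ → Fin d → ℤ) :=
  (tauD A (q.2 0) q.1, fun n => q.2 (n + 1))

/-!
Expansiveness makes `Aᵀ` invertible, so each `τ_v` is a bijection of `ℝ^d`. A point of
`X(Aᵀ,D)` with digits `d₀d₁d₂…` is `τ_{d₀}` of the point with digits `d₁d₂…`, which gives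
surjectivity. If `ρ(x, ω) = ρ(x', ω')` then `x + ω₀ = x' + ω'₀`, so `x - x'` is an integer vector
`k`, nonzero unless `(x, ω) = (x', ω')`. Hence every non-injectivity point lies in one of the
countably many sets `X ∩ (X + k)`, `k ≠ 0`, which are null by the tiling condition.
-/

namespace Expansive

variable {d : ℕ} {A : Matrix (Fin d) (Fin d) ℤ}

theorem det_ne_zero (hA : Expansive A) : A.det ≠ 0 := by
  intro h
  have hcoeff : (A.map (Int.cast : ℤ → ℂ)).charpoly.coeff 0 = 0 := by
    have := det_eq_sign_charpoly_coeff (A.map (Int.cast : ℤ → ℂ))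
    rw [← Int.cast_det, h, Int.cast_zero, eq_comm] at this
    exact (mul_eq_zero.mp this).resolve_left (by simp)
  have := hA 0 (by rwa [Polynomial.IsRoot, ← Polynomial.coeff_zero_eq_eval_zero])
  norm_num at this

theorem isUnit_det_transpose (hA : Expansive A) : IsUnit ((toR A)ᵀ).det := by
  rw [det_transpose, toR, ← Int.cast_det, isUnit_iff_ne_zero, Int.cast_ne_zero]
  exact hA.det_ne_zero

end Expansive

theorem HasSum.matrix_mulVec {ι m n R : Type*} [Fintype n] [CommSemiring R] [TopologicalSpace R]
    [IsTopologicalSemiring R] (M : Matrix m n R) {f : ι → n → R} {x : n → R} (h : HasSum f x) :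
    HasSum (fun i => M *ᵥ f i) (M *ᵥ x) :=
  h.map (mulVecLin M) (continuous_const.matrix_mulVec continuous_id)

section Digits

variable {d : ℕ} {A : Matrix (Fin d) (Fin d) ℤ}

theorem mulVec_tauD (hA : IsUnit ((toR A)ᵀ).det) (v : Fin d → ℤ) (x : Fin d → ℝ) :
    (toR A)ᵀ *ᵥ tauD A v x = x + fun i => (v i : ℝ) := by
  rw [tauD, mulVec_mulVec, mul_nonsing_inv _ hA, one_mulVec]

theorem tauD_eq_tauD_iff (hA : IsUnit ((toR A)ᵀ).det) {v w : Fin d → ℤ} {x y : Fin d → ℝ} :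
    tauD A v x = tauD A w y ↔ (x + fun i => (v i : ℝ)) = y + fun i => (w i : ℝ) := by
  refine ⟨fun h => ?_, fun h => by rw [tauD, h, tauD]⟩
  rw [← mulVec_tauD hA, h, mulVec_tauD hA]

theorem exists_tauD_eq_of_mem_attractor (hA : IsUnit ((toR A)ᵀ).det) {D : Set (Fin d → ℤ)}
    {y : Fin d → ℝ} (hy : y ∈ attractor d A D) :
    ∃ v ∈ D, ∃ x ∈ attractor d A D, tauD A v x = y := by
  obtain ⟨dig, hdig, hsum⟩ := hy
  set B := (toR A)ᵀ
  set M := B⁻¹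
  have hBM : ∀ u, B *ᵥ (M *ᵥ u) = u := fun u => by
    rw [mulVec_mulVec, mul_nonsing_inv _ hA, one_mulVec]
  have htail := ((hasSum_nat_add_iff' 1).mpr hsum).matrix_mulVec B
  refine ⟨dig 0, hdig 0, B *ᵥ y - fun i => (dig 0 i : ℝ),
    ⟨fun j => dig (j + 1), fun j => hdig (j + 1), ?_⟩, ?_⟩
  · convert htail using 1
    · ext1 j
      rw [pow_succ' M (j + 1), ← mulVec_mulVec, hBM]
    · rw [Finset.sum_range_one, zero_add, pow_one, mulVec_sub, hBM]
  · rw [tauD, sub_add_cancel, mulVec_mulVec, nonsing_inv_mul _ hA, one_mulVec]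

theorem exists_ne_zero_eq_add_of_rhoMap_eq (hA : IsUnit ((toR A)ᵀ).det)
    {p q : (Fin d → ℝ) × (ℕ → Fin d → ℤ)} (hpq : p ≠ q) (h : rhoMap A p = rhoMap A q) :
    ∃ k : Fin d → ℤ, k ≠ 0 ∧ p.1 = q.1 + fun i => (k i : ℝ) := by
  obtain ⟨x, ω⟩ := p
  obtain ⟨x', ω'⟩ := q
  simp only [rhoMap, Prod.mk.injEq, tauD_eq_tauD_iff hA] at h
  obtain ⟨hx, htail⟩ := h
  refine ⟨ω' 0 - ω 0, fun hk => hpq ?_, ?_⟩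
  · have h0 : ω 0 = ω' 0 := (sub_eq_zero.mp hk).symm
    rw [h0, add_left_inj] at hx
    refine Prod.ext hx (funext fun n => ?_)
    cases n with
    | zero => exact h0
    | succ n => exact congrFun htail n
  · ext i
    have := congrFun hx i
    simp only [Pi.add_apply, Pi.sub_apply, Int.cast_sub] at this ⊢
    linarith

end Digits

theorem TilingCondition.volume_inter_translate_eq_zero {d : ℕ} {A : Matrix (Fin d) (Fin d) ℤ}
    {D : Set (Fin d → ℤ)} (htile : TilingCondition d A D) {k : Fin d → ℤ} (hk : k ≠ 0) :
    volume (attractor d A D ∩ (fun y => y + fun i => (k i : ℝ)) '' attractor d A D) = 0 := by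
  simpa only [Pi.zero_apply, Int.cast_zero, ← Pi.zero_def, add_zero, Set.image_id'] using
    htile.2 0 k hk.symm

theorem statement12_general (d : ℕ) (A : Matrix (Fin d) (Fin d) ℤ)
    (hA : Expansive A) (D : Set (Fin d → ℤ))
    (htile : TilingCondition d A D) :
    (attractor d A D ×ˢ {ω : ℕ → Fin d → ℤ | ∀ n, ω n ∈ D} ⊆
      rhoMap A '' (attractor d A D ×ˢ {ω : ℕ → Fin d → ℤ | ∀ n, ω n ∈ D})) ∧
    volume {x : Fin d → ℝ | x ∈ attractor d A D ∧
      ∃ x' ∈ attractor d A D, ∃ ω ω' : ℕ → Fin d → ℤ,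
        (∀ n, ω n ∈ D) ∧ (∀ n, ω' n ∈ D) ∧ (x, ω) ≠ (x', ω') ∧
        rhoMap A (x, ω) = rhoMap A (x', ω')} = 0 := by
  have hdet := hA.isUnit_det_transpose
  constructor
  · rintro ⟨y, ω⟩ ⟨hy, hω⟩
    obtain ⟨v, hv, x, hx, rfl⟩ := exists_tauD_eq_of_mem_attractor hdet hy
    refine ⟨(x, Stream'.cons v ω), ⟨hx, fun n => ?_⟩, rfl⟩
    cases n with
    | zero => exact hv
    | succ n => exact hω n
  · refine measure_mono_null ?_ (measure_iUnion_null fun k : {k : Fin d → ℤ // k ≠ 0} =>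
      htile.volume_inter_translate_eq_zero k.2)
    rintro x ⟨hx, x', hx', ω, ω', -, -, hne, heq⟩
    obtain ⟨k, hk, rfl⟩ := exists_ne_zero_eq_add_of_rhoMap_eq hdet hne heq
    exact Set.mem_iUnion.mpr ⟨⟨k, hk⟩, hx, x', hx', rfl⟩

/-- under the tiling condition, ρ maps X(Aᵀ,D) × Ω onto itself
and is injective up to a Lebesgue-null set of first coordinates. -/
theorem statement12 (d : ℕ) (hd : 0 < d) (A : Matrix (Fin d) (Fin d) ℤ)
    (hA : Expansive A) (D : Set (Fin d → ℤ)) (hD : CompleteDigits A D)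
    (htile : TilingCondition d A D) :
    (attractor d A D ×ˢ {ω : ℕ → Fin d → ℤ | ∀ n, ω n ∈ D} ⊆
      rhoMap A '' (attractor d A D ×ˢ {ω : ℕ → Fin d → ℤ | ∀ n, ω n ∈ D})) ∧
    volume {x : Fin d → ℝ | x ∈ attractor d A D ∧
      ∃ x' ∈ attractor d A D, ∃ ω ω' : ℕ → Fin d → ℤ,
        (∀ n, ω n ∈ D) ∧ (∀ n, ω' n ∈ D) ∧ (x, ω) ≠ (x', ω') ∧
        rhoMap A (x, ω) = rhoMap A (x', ω')} = 0 :=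
  statement12_general d A hA D htile
end
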